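/- Let d ≥ 3, m ≥ 1 be integers, c an integer, and δ_0,...,δ_m reals with δ_0 = δ_m = 0. Suppose e_0,...,e_m are reals with e_m = 0, |e_{m-1}| ≤ 1/2 and |e_i - e_{i+1}| ≤ 1/2. Define f_max = m(c²/(8(d-1)) + c/4 + (d-1)/8) + (1/(8(d-1)))·∑_{i=1}^m (δ_{i-1}-δ_i)², and σ = f_max - ((d-1)/2)·∑_{i=1}^m (e_{i-1}-e_i)² + (if c > 0 then mc/2 else 0). Then σ ≥ 0. -/
import Mathlib


open Finset

set_option maxHeartbeats 1000000 in
/-- Nonnegativity of the correction term `σ` in Theorem 8.3: with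
`f_max = m(c²/(8(d-1)) + c/4 + (d-1)/8) + (1/(8(d-1)))∑(δ_{i-1}-δ_i)²` and the
`e_i` the rounding errors of the critical point coordinates
`a_i = ((m-i)(c+d-1) - δ_i)/(2(d-1))`, the quantity
`σ = f_max - ((d-1)/2)∑(e_{i-1}-e_i)² + (mc/2 if c > 0 else 0)` is nonnegative. -/
theorem stmt_19 (d : ℕ) (hd : 3 ≤ d) (m : ℕ) (hm : 1 ≤ m) (c : ℤ)
    (δ : ℕ → ℝ) (h0 : δ 0 = 0) (hmz : δ m = 0)
    (e : ℕ → ℝ) (hem : e m = 0)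
    (hlast : |e (m - 1)| ≤ 1 / 2)
    (hstep : ∀ i, i ≤ m - 2 → |e i - e (i + 1)| ≤ 1 / 2)
    (hround : ∀ i, i ≤ m - 1 → ∃ z : ℤ,
      (((m : ℝ) - (i : ℝ)) * ((c : ℝ) + (d : ℝ) - 1) - δ i) / (2 * ((d : ℝ) - 1)) +
        e i = (z : ℝ)) :
    0 ≤ ((m : ℝ) * ((c : ℝ) ^ 2 / (8 * ((d : ℝ) - 1)) + (c : ℝ) / 4 +
          ((d : ℝ) - 1) / 8) +
        (1 / (8 * ((d : ℝ) - 1))) * ∑ i ∈ Finset.Icc 1 m, (δ (i - 1) - δ i) ^ 2) -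
        (((d : ℝ) - 1) / 2) * ∑ i ∈ Finset.Icc 1 m, (e (i - 1) - e i) ^ 2 +
        (if 0 < c then (m : ℝ) * (c : ℝ) / 2 else 0) := by
  have hd3 : (3:ℝ) ≤ (d:ℝ) := by exact_mod_cast hd
  have hDpos : (0:ℝ) < (d:ℝ) - 1 := by linarith
  have hDne : ((d:ℝ) - 1) ≠ 0 := ne_of_gt hDpos
  -- all a_i + e_i are integers, including i = m
  have hz : ∀ i, i ≤ m → ∃ z : ℤ,
      (((m : ℝ) - (i : ℝ)) * ((c : ℝ) + (d : ℝ) - 1) - δ i) / (2 * ((d : ℝ) - 1)) +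
        e i = (z : ℝ) := by
    intro i hi
    rcases eq_or_lt_of_le hi with h | h
    · subst h
      exact ⟨0, by simp [hmz, hem]⟩
    · exact hround i (by omega)
  -- per-term inequality
  have hterm : ∀ i ∈ Finset.Icc 1 m,
      (e (i-1) - e i)^2 ≤
        (((c:ℝ) + (d:ℝ) - 1 - (δ (i-1) - δ i)) / (2 * ((d:ℝ) - 1)))^2 := by
    intro i hi
    simp only [Finset.mem_Icc] at hi
    obtain ⟨hi1, him⟩ := hi
    obtain ⟨z1, hz1⟩ := hz (i-1) (by omega)
    obtain ⟨z2, hz2⟩ := hz i him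
    have heps : |e (i-1) - e i| ≤ 1/2 := by
      rcases eq_or_lt_of_le him with h | h
      · subst h; simpa [hem] using hlast
      · have h2 := hstep (i-1) (by omega)
        have h1 : i - 1 + 1 = i := by omega
        rwa [h1] at h2
    have hcast : ((i-1 : ℕ) : ℝ) = (i:ℝ) - 1 := by
      have := Nat.cast_sub (R := ℝ) hi1
      simpa using this
    set ε := e (i-1) - e i with hεdef
    set C := ((c:ℝ) + (d:ℝ) - 1 - (δ (i-1) - δ i)) / (2 * ((d:ℝ) - 1)) with hCdef
    have hk : ε + C = ((z1 - z2 : ℤ) : ℝ) := by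
      rw [hcast] at hz1
      have hT : (((m:ℝ) - ((i:ℝ)-1)) * ((c:ℝ)+(d:ℝ)-1) - δ (i-1)) / (2*((d:ℝ)-1))
          - (((m:ℝ) - (i:ℝ)) * ((c:ℝ)+(d:ℝ)-1) - δ i) / (2*((d:ℝ)-1)) = C := by
        rw [hCdef]
        field_simp
        ring
      push_cast
      rw [hεdef]
      linarith [hz1, hz2, hT]
    set K := ((z1 - z2 : ℤ) : ℝ) with hKdef
    have hC : C = K - ε := by linarith
    have habs := abs_le.1 heps
    rw [hC]
    rcases lt_trichotomy (z1 - z2) 0 with hlt | heq | hgt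
    · have hK1 : K ≤ -1 := by
        rw [hKdef]; exact_mod_cast (by omega : z1 - z2 ≤ -1)
      nlinarith [mul_nonneg (by linarith : (0:ℝ) ≤ -K)
        (by linarith : (0:ℝ) ≤ 2*ε - K)]
    · have : K = 0 := by rw [hKdef, heq]; simp
      rw [this]; nlinarith
    · have hK1 : (1:ℝ) ≤ K := by
        rw [hKdef]; exact_mod_cast (by omega : 1 ≤ z1 - z2)
      nlinarith [mul_nonneg (by linarith : (0:ℝ) ≤ K)
        (by linarith : (0:ℝ) ≤ K - 2*ε)]
  have key := Finset.sum_le_sum hterm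
  -- telescoping sum
  have tele : ∀ n : ℕ, ∑ i ∈ Finset.Icc 1 n, (δ (i-1) - δ i) = δ 0 - δ n := by
    intro n
    induction n with
    | zero => simp
    | succ k ih =>
      rw [Finset.sum_Icc_succ_top (by omega : 1 ≤ k + 1), ih]
      simp only [Nat.add_sub_cancel]
      ring
  have hsum_u : ∑ i ∈ Finset.Icc 1 m, (δ (i-1) - δ i) = 0 := by
    rw [tele m, h0, hmz]; ring
  -- the sum of squares of the C_i
  have hCsum : ∑ i ∈ Finset.Icc 1 m,
        (((c:ℝ)+(d:ℝ)-1 - (δ (i-1) - δ i))/(2*((d:ℝ)-1)))^2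
      = (m:ℝ) * (((c:ℝ)+(d:ℝ)-1)^2/(4*((d:ℝ)-1)^2))
        + (1/(4*((d:ℝ)-1)^2)) * ∑ i ∈ Finset.Icc 1 m, (δ (i-1) - δ i)^2 := by
    have hexp : ∀ i ∈ Finset.Icc 1 m,
        (((c:ℝ)+(d:ℝ)-1 - (δ (i-1) - δ i))/(2*((d:ℝ)-1)))^2
        = ((((c:ℝ)+(d:ℝ)-1)^2/(4*((d:ℝ)-1)^2)
            + (1/(4*((d:ℝ)-1)^2)) * (δ (i-1) - δ i)^2)
          - (((c:ℝ)+(d:ℝ)-1)/(2*((d:ℝ)-1)^2)) * (δ (i-1) - δ i)) := by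
      intro i _
      field_simp
      ring
    rw [Finset.sum_congr rfl hexp, Finset.sum_sub_distrib, Finset.sum_add_distrib,
      Finset.sum_const, ← Finset.mul_sum, ← Finset.mul_sum, hsum_u, mul_zero, sub_zero,
      Nat.card_Icc]
    simp only [Nat.add_sub_cancel, nsmul_eq_mul]
  have hite : (0:ℝ) ≤ (if 0 < c then (m:ℝ) * (c:ℝ) / 2 else 0) := by
    split
    · rename_i hc
      have hc1 : (1:ℝ) ≤ (c:ℝ) := by exact_mod_cast hc
      have hm1 : (1:ℝ) ≤ (m:ℝ) := by exact_mod_cast hm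
      nlinarith
    · exact le_refl 0
  have hmul := mul_le_mul_of_nonneg_left key
    (le_of_lt (by positivity : (0:ℝ) < ((d:ℝ)-1)/2))
  rw [hCsum] at hmul
  have hfe : ∀ S : ℝ, (m:ℝ) * ((c:ℝ)^2/(8*((d:ℝ)-1)) + (c:ℝ)/4 + ((d:ℝ)-1)/8)
      + (1/(8*((d:ℝ)-1))) * S
      = (((d:ℝ)-1)/2) * ((m:ℝ) * (((c:ℝ)+(d:ℝ)-1)^2/(4*((d:ℝ)-1)^2))
        + (1/(4*((d:ℝ)-1)^2)) * S) := by
    intro S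
    field_simp
    ring
  linarith [hmul, hite, hfe (∑ i ∈ Finset.Icc 1 m, (δ (i-1) - δ i)^2)]
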